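/- arXiv:1312.1814 — 2 statements merged into one kernel-verified Lean document; each statement's English description precedes it below -/
import Mathlib

section
/- For any x ∈ ℝⁿ, the Fréchet subdifferential of the counting function c at x is contained in X_{I⊥}(x) = {y ∈ ℝⁿ : y_i = 0 whenever x_i ≠ 0}. -/
/-!
Nonzero coordinates stay nonzero near `x`, so `c y ≥ c x` for `y` near `x`: `x` is a local
minimum of `c`, and the Fréchet quotient is bounded below there by `-‖x*‖`. If `x i ≠ 0`, then
`c` is constant on `x + t • e i` for small `|t|`, where the quotient equals `-sign t * x* i`.
The liminf is therefore at most both `-x* i` and `x* i`, which forces `x* i = 0`.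
-/

open Filter Topology

section FrechetQuotient

variable {E : Type*} [NormedAddCommGroup E] [InnerProductSpace ℝ E]

noncomputable def frechetQuotient (f : E → ℝ) (x xs y : E) : ℝ :=
  (f y - f x - inner ℝ xs (y - x)) / ‖y - x‖

lemma IsLocalMin.isBoundedUnder_ge_frechetQuotient {f : E → ℝ} {x : E} (hf : IsLocalMin f x)
    (xs : E) : IsBoundedUnder (· ≥ ·) (𝓝[≠] x) (frechetQuotient f x xs) := by
  refine ⟨-‖xs‖, eventually_map.2 ?_⟩
  filter_upwards [nhdsWithin_le_nhds hf, self_mem_nhdsWithin] with y hfy hy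
  have hpos : 0 < ‖y - x‖ := norm_pos_iff.2 (sub_ne_zero.2 hy)
  rw [ge_iff_le, frechetQuotient, le_div_iff₀ hpos]
  nlinarith [real_inner_le_norm xs (y - x)]

lemma frechetQuotient_add_smul {f : E → ℝ} {x v : E} (xs : E) {t : ℝ}
    (hft : f (x + t • v) = f x) :
    frechetQuotient f x xs (x + t • v) = -(t * inner ℝ xs v) / (|t| * ‖v‖) := by
  simp [frechetQuotient, hft, inner_smul_right, norm_smul]

lemma tendsto_add_smul_nhdsNE {x v : E} (hv : v ≠ 0) :
    Tendsto (fun t : ℝ => x + t • v) (𝓝[≠] 0) (𝓝[≠] x) := by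
  refine tendsto_nhdsWithin_of_tendsto_nhds_of_eventually_within _ ?_ ?_
  · have : Continuous (fun t : ℝ => x + t • v) := by fun_prop
    simpa using this.continuousAt.tendsto.mono_left (nhdsWithin_le_nhds (a := (0 : ℝ)))
  · filter_upwards [self_mem_nhdsWithin] with t ht
    simpa [smul_eq_zero, hv] using ht

/- `hbdd` is essential: in `ℝ`, the `liminf` of a function unbounded below is the junk value `0`,
so `hxs` alone would carry no information. -/
lemma inner_eq_zero_of_liminf_frechetQuotient_nonneg {f : E → ℝ} {x xs v : E}
    (hbdd : IsBoundedUnder (· ≥ ·) (𝓝[≠] x) (frechetQuotient f x xs))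
    (hline : ∀ᶠ t in 𝓝 (0 : ℝ), f (x + t • v) = f x)
    (hxs : 0 ≤ liminf (frechetQuotient f x xs) (𝓝[≠] x)) : inner ℝ xs v = 0 := by
  rcases eq_or_ne v 0 with rfl | hv
  · exact inner_zero_right xs
  have nonneg_of_side : ∀ (l : Filter ℝ) [l.NeBot], l ≤ 𝓝[≠] 0 → ∀ a : ℝ,
      (∀ᶠ t in l, frechetQuotient f x xs (x + t • v) = a) → 0 ≤ a := by
    intro l _ hl a ha
    refine hxs.trans (liminf_le_of_frequently_le ?_ hbdd)
    exact ((tendsto_add_smul_nhdsNE hv).mono_left hl).frequently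
      (ha.mono fun _ => le_of_eq).frequently
  have hpos : 0 ≤ -(inner ℝ xs v / ‖v‖) := by
    refine nonneg_of_side (𝓝[>] 0) (nhdsWithin_mono _ fun t ht => ne_of_gt ht) _ ?_
    filter_upwards [nhdsWithin_le_nhds hline, self_mem_nhdsWithin] with t hft (ht : 0 < t)
    rw [frechetQuotient_add_smul xs hft, abs_of_pos ht, neg_div, mul_div_mul_left _ _ ht.ne']
  have hneg : 0 ≤ inner ℝ xs v / ‖v‖ := by
    refine nonneg_of_side (𝓝[<] 0) (nhdsWithin_mono _ fun t ht => ne_of_lt ht) _ ?_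
    filter_upwards [nhdsWithin_le_nhds hline, self_mem_nhdsWithin] with t hft (ht : t < 0)
    rw [frechetQuotient_add_smul xs hft, abs_of_neg ht, neg_mul, div_neg, neg_div, neg_neg,
      mul_div_mul_left _ _ ht.ne]
  simpa [hv] using le_antisymm (neg_nonneg.1 hpos) hneg

end FrechetQuotient

section Support

variable {ι : Type*}

lemma eventually_support_subset [Finite ι] (x : EuclideanSpace ℝ ι) :
    ∀ᶠ y in 𝓝 x, {i | x i ≠ 0} ⊆ {i | y i ≠ 0} := by
  have h : ∀ i, ∀ᶠ y in 𝓝 x, x i ≠ 0 → y i ≠ 0 := fun i => by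
    by_cases hi : x i = 0
    · exact Eventually.of_forall fun _ h => (h hi).elim
    · exact ((PiLp.continuous_apply 2 _ i).continuousAt.eventually_ne hi).mono fun _ h _ => h
  filter_upwards [eventually_all.2 h] with y hy i hi using hy i hi

lemma isLocalMin_ncard_support [Finite ι] (x : EuclideanSpace ℝ ι) :
    IsLocalMin (fun y : EuclideanSpace ℝ ι => ({i | y i ≠ 0}.ncard : ℝ)) x := by
  filter_upwards [eventually_support_subset x] with y hy
  exact Nat.cast_le.2 (Set.ncard_le_ncard hy (Set.toFinite _))

lemma eventually_ncard_support_add_smul_single [DecidableEq ι] {x : EuclideanSpace ℝ ι} {i : ι}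
    (hi : x i ≠ 0) :
    ∀ᶠ t in 𝓝 (0 : ℝ),
      ({j | (x + t • EuclideanSpace.single i (1 : ℝ) : EuclideanSpace ℝ ι) j ≠ 0}.ncard : ℝ) =
        {j | x j ≠ 0}.ncard := by
  have hcont : Continuous fun t : ℝ => x i + t := by fun_prop
  filter_upwards [hcont.continuousAt.eventually_ne (by simpa using hi)] with t ht
  suffices hset : {j | (x + t • EuclideanSpace.single i (1 : ℝ) : EuclideanSpace ℝ ι) j ≠ 0} =
      {j | x j ≠ 0} by rw [hset]
  ext j
  by_cases hj : j = i
  · subst hj; simpa [hi] using ht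
  · simp [hj]

end Support

theorem frechet_subset_XIorth (n : ℕ) (x : EuclideanSpace ℝ (Fin n))
    (c : EuclideanSpace ℝ (Fin n) → ℝ)
    (hc : ∀ y, c y = (Set.ncard {i : Fin n | y i ≠ 0} : ℝ))
    (xs : EuclideanSpace ℝ (Fin n))
    (hxs : 0 ≤ Filter.liminf
      (fun y => (c y - c x - inner ℝ xs (y - x)) / ‖y - x‖) (𝓝[≠] x)) :
    ∀ i, x i ≠ 0 → xs i = 0 := by
  intro i hi
  obtain rfl : c = fun y => ({j | y j ≠ 0}.ncard : ℝ) := funext hc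
  have h := inner_eq_zero_of_liminf_frechetQuotient_nonneg
    ((isLocalMin_ncard_support x).isBoundedUnder_ge_frechetQuotient xs)
    (eventually_ncard_support_add_smul_single hi) hxs
  simpa [EuclideanSpace.inner_single_right] using h
end

section
/- For any x ∈ ℝⁿ, every element of X_{I⊥}(x) = {y ∈ ℝⁿ : y_i = 0 whenever x_i ≠ 0} is a proximal subgradient of the counting function c at x, i.e., X_{I⊥}(x) ⊆ ∂_P c(x). -/
/-!
Near `x` the support of `y` can only grow, and `⟪xs, y - x⟫ < 1`. If it grows strictly, the
count jumps by at least one, which beats the linear term. If not, each coordinate of `y - x`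
outside the support of `x` vanishes, while `xs` vanishes on that support, so `⟪xs, y - x⟫ = 0`.
-/

open Filter Topology

section

variable {ι : Type*}

lemma EuclideanSpace.eventually_apply_ne_zero_of_ne_zero [Finite ι] (x : EuclideanSpace ℝ ι) :
    ∀ᶠ y in 𝓝 x, ∀ i, x i ≠ 0 → y i ≠ 0 :=
  eventually_all.2 fun i =>
    eventually_imp_distrib_left.2 fun hi => (PiLp.continuous_apply 2 _ i).continuousAt.eventually_ne hi

lemma EuclideanSpace.inner_sub_eq_zero_of_support [Fintype ι] {x y xs : EuclideanSpace ℝ ι}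
    (hxs : ∀ i, x i ≠ 0 → xs i = 0) (hy : ∀ i, x i = 0 → y i = 0) :
    inner ℝ xs (y - x) = 0 := by
  rw [PiLp.inner_apply]
  refine Finset.sum_eq_zero fun i _ => ?_
  by_cases hi : x i = 0
  · simp [hi, hy i hi]
  · simp [hxs i hi]

end

theorem XIorth_subset_proximal (n : ℕ) (x : EuclideanSpace ℝ (Fin n))
    (c : EuclideanSpace ℝ (Fin n) → ℝ)
    (hc : ∀ y, c y = (Set.ncard {i : Fin n | y i ≠ 0} : ℝ))
    (xs : EuclideanSpace ℝ (Fin n))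
    (hxs : ∀ i, x i ≠ 0 → xs i = 0) :
    ∃ σ ≥ (0 : ℝ), ∃ ρ > (0 : ℝ), ∀ y : EuclideanSpace ℝ (Fin n), ‖y - x‖ ≤ ρ →
      c x ≤ c y - inner ℝ xs (y - x) + σ * ‖y - x‖ ^ 2 := by
  have hinner : ∀ᶠ y in 𝓝 x, inner ℝ xs (y - x) < 1 :=
    ((continuous_const.inner (continuous_id.sub continuous_const)).tendsto' x 0
      (by simp)).eventually (gt_mem_nhds one_pos)
  obtain ⟨ρ, hρ, hnear⟩ := Metric.nhds_basis_closedBall.eventually_iff.1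
    ((EuclideanSpace.eventually_apply_ne_zero_of_ne_zero x).and hinner)
  refine ⟨0, le_rfl, ρ, hρ, fun y hy => ?_⟩
  obtain ⟨hsupp, hlt⟩ := hnear (by rwa [Metric.mem_closedBall, dist_eq_norm])
  have hsub : {i | x i ≠ 0} ⊆ {i | y i ≠ 0} := hsupp
  rw [hc, hc, zero_mul, add_zero]
  by_cases hnew : ∃ i, y i ≠ 0 ∧ x i = 0
  · obtain ⟨i, hyi, hxi⟩ := hnew
    have hcard := Set.ncard_lt_ncard ((Set.ssubset_iff_of_subset hsub).2 ⟨i, hyi, not_not.2 hxi⟩)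
    have hjump : (Set.ncard {i | x i ≠ 0} : ℝ) + 1 ≤ Set.ncard {i | y i ≠ 0} := by
      exact_mod_cast hcard
    linarith
  · push Not at hnew
    have hy0 : ∀ i, x i = 0 → y i = 0 := fun i hxi => not_not.1 fun hyi => hnew i hyi hxi
    have hsupp_eq : {i | x i ≠ 0} = {i | y i ≠ 0} :=
      hsub.antisymm fun i hyi hxi => hyi (hy0 i hxi)
    rw [EuclideanSpace.inner_sub_eq_zero_of_support hxs hy0, hsupp_eq, sub_zero]
end
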